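/- Let (X,T) be a simple, properly ordered Bratteli-Vershik system and let (X',T') be its telescoping to levels 0 = n_0 < n_1 < n_2 < .... Then every depth k pair of paths in X' (k >= 1) is the image under the telescoping of a pair of paths in X that is depth i for some i with n_k <= i < n_{k+1}. -/

import Mathlib

set_option autoImplicit false

/-- An ordered Bratteli diagram: finite nonempty vertex sets `V n`, a single root
vertex at level `0`, finite edge sets `E n` (edges from level `n` to level `n+1`,
multiple edges allowed), every vertex has an outgoing edge, every non-root vertex
an incoming edge, and the edges into each vertex carry a linear order, encoded by
the relation `elt` which relates only edges with the same target. -/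
structure BDiagram where
  V : ℕ → Type
  E : ℕ → Type
  fintV : ∀ n, Fintype (V n)
  fintE : ∀ n, Fintype (E n)
  nonV : ∀ n, Nonempty (V n)
  rootSubsingleton : Subsingleton (V 0)
  src : ∀ {n}, E n → V n
  tgt : ∀ {n}, E n → V (n + 1)
  hasOut : ∀ (n : ℕ) (v : V n), ∃ e : E n, src e = v
  hasIn : ∀ (n : ℕ) (v : V (n + 1)), ∃ e : E n, tgt e = v
  elt : ∀ {n}, E n → E n → Prop
  elt_tgt : ∀ (n : ℕ) (e f : E n), elt e f → tgt e = tgt f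
  elt_irrefl : ∀ (n : ℕ) (e : E n), ¬ elt e e
  elt_trans : ∀ (n : ℕ) (e f g : E n), elt e f → elt f g → elt e g
  elt_total : ∀ (n : ℕ) (e f : E n), tgt e = tgt f → e ≠ f → elt e f ∨ elt f e

namespace BDiagram

variable (B : BDiagram)

def castV {m n : ℕ} (h : m = n) (v : B.V m) : B.V n := h ▸ v

/-- An edge is minimal if no edge (into the same target) is below it. -/
def IsMinEdge {n : ℕ} (e : B.E n) : Prop := ∀ e' : B.E n, ¬ B.elt e' e

/-- An edge is maximal if no edge (into the same target) is above it. -/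
def IsMaxEdge {n : ℕ} (e : B.E n) : Prop := ∀ e' : B.E n, ¬ B.elt e e'

/-- The space of infinite paths from the root. -/
def PathSpace : Type := { x : ∀ n, B.E n // ∀ n, B.tgt (x n) = B.src (x (n + 1)) }

def IsMinPath (x : B.PathSpace) : Prop := ∀ n, B.IsMinEdge (x.1 n)

def IsMaxPath (x : B.PathSpace) : Prop := ∀ n, B.IsMaxEdge (x.1 n)

/-- Properly ordered: unique minimal and unique maximal path. -/
def ProperlyOrdered : Prop :=
  (∃! x : B.PathSpace, B.IsMinPath x) ∧ (∃! x : B.PathSpace, B.IsMaxPath x)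

/-- The partial order on cofinal paths: `x < y` iff they eventually agree and at the
last disagreement the edge of `x` is below the edge of `y`. -/
def pathLT (x y : B.PathSpace) : Prop :=
  ∃ N : ℕ, B.elt (x.1 N) (y.1 N) ∧ ∀ n : ℕ, N < n → x.1 n = y.1 n

/-- `T` is the Vershik map: each non-maximal path goes to its successor, and each
maximal path goes to a minimal path. -/
def IsVershik (T : B.PathSpace ≃ B.PathSpace) : Prop :=
  (∀ x : B.PathSpace, ¬ B.IsMaxPath x →
    B.pathLT x (T x) ∧ ∀ z : B.PathSpace, B.pathLT x z → ¬ B.pathLT z (T x)) ∧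
  (∀ x : B.PathSpace, B.IsMaxPath x → B.IsMinPath (T x))

/-- `f` is a chain of consecutive edges on levels `[a, b)`. -/
def SegOn (f : ∀ i, B.E i) (a b : ℕ) : Prop :=
  ∀ i : ℕ, a ≤ i → i + 1 < b → B.tgt (f i) = B.src (f (i + 1))

/-- Simplicity: some telescoping has complete connections between adjacent levels. -/
def Simple : Prop :=
  ∃ ns : ℕ → ℕ, StrictMono ns ∧ ns 0 = 0 ∧
    ∀ (l c : ℕ), ns (l + 1) = c + 1 →
      ∀ (v : B.V (ns l)) (w : B.V (c + 1)),
        ∃ f : ∀ i, B.E i, B.SegOn f (ns l) (c + 1) ∧ B.src (f (ns l)) = v ∧ B.tgt (f c) = w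

/-- The natural (Cantor) topology on the path space, induced from the product of
the discrete topologies on the edge sets. -/
def pathTop : TopologicalSpace B.PathSpace :=
  TopologicalSpace.induced Subtype.val (@Pi.topologicalSpace ℕ B.E (fun _ => ⊥))

/-- Integer iterates of a bijection of the path space. -/
def iterZ (T : B.PathSpace ≃ B.PathSpace) (m : ℤ) : B.PathSpace ≃ B.PathSpace :=
  (T : Equiv.Perm B.PathSpace) ^ m

/-- Two paths have the same `k`-coding: for every time `m` the initial segments of
`T^m x` and `T^m y` from the root to level `k` coincide. -/
def SameCoding (T : B.PathSpace ≃ B.PathSpace) (k : ℕ) (x y : B.PathSpace) : Prop :=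
  ∀ (m : ℤ) (i : ℕ), i < k → ((B.iterZ T m) x).1 i = ((B.iterZ T m) y).1 i

/-- A depth `k` pair: distinct paths with the same `k`-coding but not the same
`(k+1)`-coding. -/
def DepthPair (T : B.PathSpace ≃ B.PathSpace) (k : ℕ) (x y : B.PathSpace) : Prop :=
  x ≠ y ∧ B.SameCoding T k x y ∧ ¬ B.SameCoding T (k + 1) x y

/-- The pair `x, y` has a `j` cut: for some time `m`, both `T^m x` and `T^m y` are
minimal from the root into level `j`. -/
def HasCut (T : B.PathSpace ≃ B.PathSpace) (j : ℕ) (x y : B.PathSpace) : Prop :=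
  ∃ m : ℤ, (∀ i : ℕ, i < j → B.IsMinEdge (((B.iterZ T m) x).1 i)) ∧
    (∀ i : ℕ, i < j → B.IsMinEdge (((B.iterZ T m) y).1 i))

/-- Nonexpansive: for every `k ≥ 1` there are two distinct paths with the same
`k`-coding. -/
def Nonexpansive (T : B.PathSpace ≃ B.PathSpace) : Prop :=
  ∀ k : ℕ, 1 ≤ k → ∃ x y : B.PathSpace, x ≠ y ∧ B.SameCoding T k x y

/-- Well timed: for every `k ≥ 1` and every `j > k` there is a depth `k` pair with
a `j` cut. -/
def WellTimed (T : B.PathSpace ≃ B.PathSpace) : Prop :=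
  ∀ k : ℕ, 1 ≤ k → ∀ j : ℕ, k < j →
    ∃ x y : B.PathSpace, B.DepthPair T k x y ∧ B.HasCut T j x y

/-- Very well timed: for every `k ≥ 1` there is a depth `k` pair having a `j` cut
for every `j > k`. -/
def VeryWellTimed (T : B.PathSpace ≃ B.PathSpace) : Prop :=
  ∀ k : ℕ, 1 ≤ k →
    ∃ x y : B.PathSpace, B.DepthPair T k x y ∧ ∀ j : ℕ, k < j → B.HasCut T j x y

/-- Weakly well timed: for infinitely many `k ≥ 1`, for every `j > k` there is a
depth `k` pair with a `j` cut. -/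
def WeaklyWellTimed (T : B.PathSpace ≃ B.PathSpace) : Prop :=
  ∀ K : ℕ, ∃ k : ℕ, K ≤ k ∧ 1 ≤ k ∧ ∀ j : ℕ, k < j →
    ∃ x y : B.PathSpace, B.DepthPair T k x y ∧ B.HasCut T j x y

/-- Untimed: for every `k ≥ 1` there is a `j > k` such that no depth `k` pair has a
`j` cut. -/
def Untimed (T : B.PathSpace ≃ B.PathSpace) : Prop :=
  ∀ k : ℕ, 1 ≤ k → ∃ j : ℕ, k < j ∧
    ∀ x y : B.PathSpace, B.DepthPair T k x y → ¬ B.HasCut T j x y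

/-- Very untimed: for every `k ≥ 1`, no depth `k` pair has a `(k+1)` cut. -/
def VeryUntimed (T : B.PathSpace ≃ B.PathSpace) : Prop :=
  ∀ k : ℕ, 1 ≤ k →
    ∀ x y : B.PathSpace, B.DepthPair T k x y → ¬ B.HasCut T (k + 1) x y

/-- Finite paths from the root to level `n`. -/
def FinPath (n : ℕ) : Type :=
  { f : (i : Fin n) → B.E i.val //
    ∀ (i : ℕ) (h : i + 1 < n), B.tgt (f ⟨i, by omega⟩) = B.src (f ⟨i + 1, h⟩) }

/-- The lexicographic (from the end) order on finite paths to level `n` induced by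
the orders on the edges. -/
def finLT {n : ℕ} (p q : B.FinPath n) : Prop :=
  ∃ (N : ℕ) (h : N < n), B.elt (p.1 ⟨N, h⟩) (q.1 ⟨N, h⟩) ∧
    ∀ (i : ℕ) (hi : i < n), N < i → p.1 ⟨i, hi⟩ = q.1 ⟨i, hi⟩

/-- The finite path `p` to level `n` ends at the vertex `v`. -/
def EndsAt {n : ℕ} (p : B.FinPath n) (v : B.V n) : Prop :=
  ∀ (m : ℕ) (h : n = m + 1), B.tgt (p.1 ⟨m, by omega⟩) = B.castV h v

/-- The initial segment of an infinite path, from the root to level `n`. -/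
def pathInit (x : B.PathSpace) (n : ℕ) : B.FinPath n :=
  ⟨fun i => x.1 i.val, fun i _ => x.2 i⟩

/-- The vertex of an infinite path at level `n`. -/
def pathVert (x : B.PathSpace) (n : ℕ) : B.V n := B.src (x.1 n)

theorem pathInit_endsAt (x : B.PathSpace) (n : ℕ) :
    B.EndsAt (B.pathInit x n) (B.pathVert x n) := by
  intro m h
  subst h
  exact x.2 m

/-- Truncation of a finite path to a lower level. -/
def truncTo {n : ℕ} (k : ℕ) (hk : k ≤ n) (p : B.FinPath n) : B.FinPath k :=
  ⟨fun i => p.1 ⟨i.val, by omega⟩, fun i h => p.2 i (by omega)⟩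

/-- Paths `x, x'` are `k`-equivalent at level `n`: there is an order isomorphism
between the sets of finite paths from the root into their level-`n` vertices which
preserves truncations to level `k` (equality of `k`-basic blocks) and which matches
the initial segment of `x` with the initial segment of `x'` (the "dot" is in the
same place). -/
def KEquivAt (k n : ℕ) (x x' : B.PathSpace) : Prop :=
  ∃ φ : { p : B.FinPath n // B.EndsAt p (B.pathVert x n) } ≃
      { p : B.FinPath n // B.EndsAt p (B.pathVert x' n) },
    (∀ p q, B.finLT p.1 q.1 ↔ B.finLT (φ p).1 (φ q).1) ∧
    (∀ p (i : ℕ) (hik : i < k) (hin : i < n), ((φ p).1).1 ⟨i, hin⟩ = (p.1).1 ⟨i, hin⟩) ∧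
    φ ⟨B.pathInit x n, B.pathInit_endsAt x n⟩ = ⟨B.pathInit x' n, B.pathInit_endsAt x' n⟩

/-- Paths are `k`-equivalent: they agree from the root to level `k` and are
`k`-equivalent at every level `n > k`. -/
def KEquivPaths (k : ℕ) (x x' : B.PathSpace) : Prop :=
  (∀ i : ℕ, i < k → x.1 i = x'.1 i) ∧ ∀ n : ℕ, k < n → B.KEquivAt k n x x'

/-- Standard nonexpansive: for every `k ≥ 1` there is a pair of distinct
`k`-equivalent paths. -/
def SNE : Prop := ∀ k : ℕ, 1 ≤ k → ∃ x x' : B.PathSpace, x ≠ x' ∧ B.KEquivPaths k x x'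

/-!  ### Telescoping  -/

theorem castV_eq_of_heq {m n : ℕ} (h : m = n) {v : B.V m} {w : B.V n} (hw : HEq v w) :
    B.castV h v = w := by
  subst h
  exact eq_of_heq hw

theorem castV_heq {m n : ℕ} (h : m = n) (v : B.V m) : HEq (B.castV h v) v := by
  subst h
  rfl

theorem castV_inj {m n : ℕ} (h : m = n) {v w : B.V m}
    (hvw : B.castV h v = B.castV h w) : v = w := by
  subst h
  exact hvw

def castE {m n : ℕ} (h : m = n) (e : B.E m) : B.E n := h ▸ e

noncomputable def chainFrom (a : ℕ) (v : B.V a) : (i : ℕ) → B.E (a + i)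
  | 0 => (B.hasOut a v).choose
  | i + 1 => (B.hasOut (a + i + 1) (B.tgt (chainFrom a v i))).choose

theorem chainFrom_src_zero (a : ℕ) (v : B.V a) : B.src (B.chainFrom a v 0) = v :=
  (B.hasOut a v).choose_spec

theorem chainFrom_src_succ (a : ℕ) (v : B.V a) (i : ℕ) :
    B.src (B.chainFrom a v (i + 1)) = B.tgt (B.chainFrom a v i) :=
  (B.hasOut (a + i + 1) (B.tgt (B.chainFrom a v i))).choose_spec

noncomputable def chainTo (a : ℕ) : (j : ℕ) → (w : B.V (a + j + 1)) → (i : ℕ) → i ≤ j → B.E (a + i)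
  | 0, w, i, _ => B.castE (by omega : a + 0 = a + i) (B.hasIn a w).choose
  | j + 1, w, i, _ =>
      if h : i ≤ j then chainTo a j (B.src (B.hasIn (a + j + 1) w).choose) i h
      else B.castE (by omega : a + (j + 1) = a + i) (B.hasIn (a + j + 1) w).choose

theorem chainTo_tgt_last (a : ℕ) : ∀ (j : ℕ) (w : B.V (a + j + 1)),
    B.tgt (B.chainTo a j w j le_rfl) = w := by
  intro j w
  cases j with
  | zero =>
      simp only [chainTo]
      exact (B.hasIn a w).choose_spec
  | succ j =>
      simp only [chainTo]
      rw [dif_neg (by omega : ¬ j + 1 ≤ j)]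
      exact (B.hasIn (a + j + 1) w).choose_spec

theorem chainTo_chain (a : ℕ) : ∀ (j : ℕ) (w : B.V (a + j + 1)) (i : ℕ) (h : i + 1 ≤ j)
    (h' : i ≤ j), B.tgt (B.chainTo a j w i h') = B.src (B.chainTo a j w (i + 1) h) := by
  intro j
  induction j with
  | zero => intro w i h h'; omega
  | succ j ih =>
      intro w i h h'
      by_cases hij : i + 1 ≤ j
      · simp only [chainTo]
        rw [dif_pos (by omega : i ≤ j), dif_pos hij]
        exact ih _ i hij (by omega)
      · have hi : i = j := by omega
        subst hi
        simp only [chainTo]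
        rw [dif_pos (le_refl i), dif_neg (by omega : ¬ i + 1 ≤ i)]
        exact B.chainTo_tgt_last a i _


def TelE (a b : ℕ) : Type :=
  { f : (i : Fin (b - a)) → B.E (a + i.val) //
    ∀ (i : ℕ) (h : i + 1 < b - a), B.tgt (f ⟨i, by omega⟩) = B.src (f ⟨i + 1, h⟩) }

def telSrc {a b : ℕ} (hab : a < b) (f : B.TelE a b) : B.V a :=
  B.src (f.1 ⟨0, by omega⟩)

def telTgt {a b : ℕ} (hab : a < b) (f : B.TelE a b) : B.V b :=
  B.castV (by omega : a + (b - a - 1) + 1 = b) (B.tgt (f.1 ⟨b - a - 1, by omega⟩))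

def telLT {a b : ℕ} (f g : B.TelE a b) : Prop :=
  ∃ (N : ℕ) (h : N < b - a), B.elt (f.1 ⟨N, h⟩) (g.1 ⟨N, h⟩) ∧
    ∀ (i : ℕ) (hi : i < b - a), N < i → f.1 ⟨i, hi⟩ = g.1 ⟨i, hi⟩

noncomputable def Telescope (ns : ℕ → ℕ) (hmono : StrictMono ns) (h0 : ns 0 = 0) : BDiagram where
  V l := B.V (ns l)
  E l := B.TelE (ns l) (ns (l + 1))
  fintV l := B.fintV (ns l)
  fintE l := by
    classical
    letI : ∀ i : Fin (ns (l + 1) - ns l), Fintype (B.E (ns l + i.val)) := fun i => B.fintE _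
    exact Subtype.fintype _
  nonV l := B.nonV (ns l)
  rootSubsingleton := by show Subsingleton (B.V (ns 0)); rw [h0]; exact B.rootSubsingleton
  src {l} f := B.telSrc (hmono (Nat.lt_succ_self l)) f
  tgt {l} f := B.telTgt (hmono (Nat.lt_succ_self l)) f
  hasOut := by
    intro l v
    refine ⟨⟨fun i => B.chainFrom (ns l) v i.val,
      fun i h => (B.chainFrom_src_succ (ns l) v i).symm⟩, ?_⟩
    exact B.chainFrom_src_zero (ns l) v
  hasIn := by
    intro l w
    have hab : ns l < ns (l + 1) := hmono (Nat.lt_succ_self l)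
    have hj : ns l + (ns (l + 1) - ns l - 1) + 1 = ns (l + 1) := by omega
    refine ⟨⟨fun i => B.chainTo (ns l) (ns (l + 1) - ns l - 1) (B.castV hj.symm w) i.val
        (by omega), fun i h => B.chainTo_chain _ _ _ i (by omega) (by omega)⟩, ?_⟩
    show B.castV (by omega) (B.tgt (B.chainTo (ns l) (ns (l + 1) - ns l - 1)
      (B.castV hj.symm w) (ns (l + 1) - ns l - 1) (by omega))) = w
    rw [B.chainTo_tgt_last]
    exact B.castV_eq_of_heq _ (B.castV_heq _ w)
  elt {l} f g := B.telLT f g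
  elt_tgt := by
    rintro l f g ⟨N, hN, hlt, hgt⟩
    show B.telTgt _ f = B.telTgt _ g
    unfold telTgt
    refine congrArg (B.castV _) ?_
    rcases eq_or_lt_of_le (show N ≤ ns (l + 1) - ns l - 1 by omega) with h | h
    · subst h
      exact B.elt_tgt _ _ _ hlt
    · exact congrArg B.tgt (hgt _ (by omega) h)
  elt_irrefl := by
    rintro l f ⟨N, h, hlt, -⟩
    exact B.elt_irrefl _ _ hlt
  elt_trans := by
    rintro l f g h ⟨N₁, hN₁, hlt₁, hgt₁⟩ ⟨N₂, hN₂, hlt₂, hgt₂⟩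
    rcases lt_trichotomy N₁ N₂ with hc | hc | hc
    · exact ⟨N₂, hN₂, by rw [hgt₁ N₂ hN₂ hc]; exact hlt₂,
        fun i hi hN => (hgt₁ i hi (by omega)).trans (hgt₂ i hi hN)⟩
    · subst hc
      exact ⟨N₁, hN₁, B.elt_trans _ _ _ _ hlt₁ hlt₂,
        fun i hi hN => (hgt₁ i hi hN).trans (hgt₂ i hi hN)⟩
    · refine ⟨N₁, hN₁, ?_, fun i hi hN => (hgt₁ i hi hN).trans (hgt₂ i hi (by omega))⟩
      rw [← hgt₂ N₁ hN₁ hc]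
      exact hlt₁
  elt_total := by
    intro l f g htgt hne
    classical
    have hab : ns l < ns (l + 1) := hmono (Nat.lt_succ_self l)
    set b := ns (l + 1) - ns l with hb
    have hex : ∃ N, ∃ h : N < b, f.1 ⟨N, h⟩ ≠ g.1 ⟨N, h⟩ := by
      by_contra hco
      push_neg at hco
      exact hne (Subtype.ext (funext fun i => hco i.val i.isLt))
    set P : ℕ → Prop := fun N => ∃ h : N < b, f.1 ⟨N, h⟩ ≠ g.1 ⟨N, h⟩ with hP
    obtain ⟨N₀, hN₀⟩ := hex
    set N := Nat.findGreatest P b with hNdef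
    have hPN : P N := Nat.findGreatest_spec (le_of_lt hN₀.choose) hN₀
    have hafter : ∀ i (hi : i < b), N < i → f.1 ⟨i, hi⟩ = g.1 ⟨i, hi⟩ := by
      intro i hi hNi
      by_contra hcon
      exact Nat.findGreatest_is_greatest hNi (le_of_lt hi) ⟨hi, hcon⟩
    clear_value N
    obtain ⟨hNb, hNne⟩ := hPN
    have htgtN : B.tgt (f.1 ⟨N, hNb⟩) = B.tgt (g.1 ⟨N, hNb⟩) := by
      rcases eq_or_lt_of_le (show N ≤ b - 1 by omega) with h | h
      · -- N is the last index; use equality of targets of the composite edges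
        subst h
        exact B.castV_inj _ htgt
      · have h2 : f.1 ⟨N + 1, by omega⟩ = g.1 ⟨N + 1, by omega⟩ :=
          hafter (N + 1) (by omega) (by omega)
        rw [f.2 N (by omega), g.2 N (by omega), h2]
    rcases B.elt_total _ _ _ htgtN hNne with h | h
    · exact Or.inl ⟨N, hNb, h, hafter⟩
    · exact Or.inr ⟨N, hNb, h, fun i hi hN => (hafter i hi hN).symm⟩

def teleMap (ns : ℕ → ℕ) (hmono : StrictMono ns) (h0 : ns 0 = 0) (x : B.PathSpace) :
    (B.Telescope ns hmono h0).PathSpace :=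
  ⟨fun l => ⟨fun i => x.1 (ns l + i.val), fun i _ => x.2 (ns l + i)⟩, fun l => by
    have hab : ns l < ns (l + 1) := hmono (Nat.lt_succ_self l)
    have hm : ns l + (ns (l + 1) - ns l - 1) + 1 = ns (l + 1) := by omega
    show B.castV _ (B.tgt (x.1 (ns l + (ns (l + 1) - ns l - 1)))) = B.src (x.1 (ns (l + 1) + 0))
    rw [x.2 (ns l + (ns (l + 1) - ns l - 1))]
    exact B.castV_eq_of_heq _ (by rw [hm]; exact HEq.rfl)⟩


/-- Level `n+1` is uniformly ordered: there is a single nonempty block `P` of paths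
from the root to level `n` such that the `n`-basic block at every vertex at level
`n+1` is a positive power of `P`. -/
def UniformlyOrderedLevel (n : ℕ) : Prop :=
  ∃ (p : ℕ) (hp : 0 < p) (P : Fin p → B.FinPath n),
    ∀ v : B.V (n + 1), ∃ (m : ℕ), 0 < m ∧
      ∃ enum : Fin (m * p) ≃ { q : B.FinPath (n + 1) // B.EndsAt q v },
        (∀ i j : Fin (m * p), i < j ↔ B.finLT (enum i).1 (enum j).1) ∧
        (∀ i : Fin (m * p),
          B.truncTo n (Nat.le_succ n) (enum i).1 = P ⟨i.val % p, Nat.mod_lt _ hp⟩)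

/-- The ordinal label of an edge: its position in the linear order on the edges
into its target. -/
noncomputable def edgeLabel {n : ℕ} (e : B.E n) : ℕ := Nat.card { e' : B.E n // B.elt e' e }

/-- Deterministic: for every `n ≥ 1`, distinct edges with the same source at level
`n` have different ordinal labels. -/
def Deterministic : Prop :=
  ∀ n : ℕ, 1 ≤ n → ∀ e f : B.E n, B.src e = B.src f → e ≠ f →
    B.edgeLabel e ≠ B.edgeLabel f

end BDiagram

/-- A Bratteli–Vershik system: a simple, properly ordered ordered Bratteli diagram
together with its Vershik map. -/
structure BVSystem where
  B : BDiagram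
  T : B.PathSpace ≃ B.PathSpace
  proper : B.ProperlyOrdered
  simple : B.Simple
  vershik : B.IsVershik T

/-- Conjugacy of systems: an equivariant homeomorphism of the path spaces taking
minimal paths to minimal paths. -/
def Conjugate (S S' : BVSystem) : Prop :=
  ∃ φ : S.B.PathSpace ≃ S'.B.PathSpace,
    (@Continuous _ _ S.B.pathTop S'.B.pathTop φ) ∧
    (@Continuous _ _ S'.B.pathTop S.B.pathTop φ.symm) ∧
    (∀ x, φ (S.T x) = S'.T (φ x)) ∧
    (∀ x, S.B.IsMinPath x → S'.B.IsMinPath (φ x))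

/-- An odometer: a system whose diagram has exactly one vertex at every level. -/
def IsOdometer (S : BVSystem) : Prop := ∀ n, Subsingleton (S.B.V n)

/-!
Telescoping is onto on paths and preserves and reflects the order of cofinal paths, hence also
maximality, minimality and successors; with proper ordering this makes it conjugate the Vershik
maps. The first `k` edges of a telescoped path are the first `ns k` edges of the original one, so
having the same `k`-coding in the telescoping means having the same `ns k`-coding in `B`. A depth
`k` pair of the telescoping thus lifts to a pair with the same `ns k`-coding but different
`ns (k + 1)`-codings, and the last level in between up to which the codings agree is its depth.
-/

theorem StrictMono.exists_le_and_lt_succ {f : ℕ → ℕ} (hf : StrictMono f) (h0 : f 0 = 0)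
    (n : ℕ) : ∃ l, f l ≤ n ∧ n < f (l + 1) := by
  classical
  have hex : ∃ l, n < f (l + 1) := ⟨n, (Nat.lt_succ_self n).trans_le hf.le_apply⟩
  refine ⟨Nat.find hex, ?_, Nat.find_spec hex⟩
  rcases hl : Nat.find hex with _ | l
  · exact h0.trans_le n.zero_le
  · exact not_lt.mp (Nat.find_min hex (hl ▸ Nat.lt_succ_self l))

theorem StrictMono.eq_of_le_of_lt_succ {f : ℕ → ℕ} (hf : StrictMono f) {n l l' : ℕ}
    (h₁ : f l ≤ n) (h₂ : n < f (l + 1)) (h₁' : f l' ≤ n) (h₂' : n < f (l' + 1)) :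
    l = l' := by
  by_contra hne
  rcases Nat.lt_or_gt_of_ne hne with h | h
  · have := hf.monotone (show l + 1 ≤ l' from h); omega
  · have := hf.monotone (show l' + 1 ≤ l from h); omega

theorem Nat.exists_le_lt_and_not_succ {P : ℕ → Prop} {a b : ℕ} (hab : a ≤ b) (ha : P a)
    (hb : ¬ P b) : ∃ i, a ≤ i ∧ i < b ∧ P i ∧ ¬ P (i + 1) := by
  induction b, hab using Nat.le_induction with
  | base => exact absurd ha hb
  | succ b hab ih =>
    by_cases hPb : P b
    · exact ⟨b, hab, Nat.lt_succ_self b, hPb, hb⟩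
    · obtain ⟨i, hai, hib, hPi, hPi'⟩ := ih hPb
      exact ⟨i, hai, hib.trans (Nat.lt_succ_self b), hPi, hPi'⟩

theorem Function.Semiconj.perm_zpow {α β : Type*} {f : α → β} {T : Equiv.Perm α}
    {T' : Equiv.Perm β} (h : Function.Semiconj f T T') (m : ℤ) :
    Function.Semiconj f ⇑(T ^ m) ⇑(T' ^ m) := by
  cases m with
  | ofNat n =>
    simpa only [Int.ofNat_eq_natCast, zpow_natCast, Equiv.Perm.coe_pow] using h.iterate_right n
  | negSucc n =>
    have hinv : Function.Semiconj f ⇑T⁻¹ ⇑T'⁻¹ :=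
      h.inverses_right T.apply_symm_apply T'.symm_apply_apply
    simpa only [zpow_negSucc, ← inv_pow, Equiv.Perm.coe_pow] using hinv.iterate_right (n + 1)

namespace BDiagram

variable {B : BDiagram}

theorem exists_chain_to_edge {n : ℕ} (e : B.E n) :
    ∃ f : ∀ i, B.E i, f n = e ∧ ∀ i < n, B.tgt (f i) = B.src (f (i + 1)) := by
  classical
  induction n with
  | zero =>
    let g : ∀ i, B.E i := fun i => (B.hasOut i (B.nonV i).some).choose
    exact ⟨Function.update g 0 e, Function.update_self .., fun i hi => absurd hi i.not_lt_zero⟩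
  | succ n ih =>
    obtain ⟨d, hd⟩ := B.hasIn n (B.src e)
    obtain ⟨f, hfn, hf⟩ := ih d
    refine ⟨Function.update f (n + 1) e, Function.update_self .., fun i hi => ?_⟩
    rw [Function.update_of_ne (by omega)]
    rcases Nat.lt_succ_iff_lt_or_eq.mp hi with hi | rfl
    · rw [Function.update_of_ne (by omega)]
      exact hf i hi
    · rw [Function.update_self, hfn, hd]

theorem exists_path_eq_above (x : B.PathSpace) {n : ℕ} (e : B.E n)
    (he : B.tgt e = B.tgt (x.1 n)) :
    ∃ z : B.PathSpace, z.1 n = e ∧ ∀ m, n < m → z.1 m = x.1 m := by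
  classical
  obtain ⟨f, hfn, hf⟩ := exists_chain_to_edge e
  refine ⟨⟨fun i => if i ≤ n then f i else x.1 i, fun i => ?_⟩, by simp [hfn],
    fun m hm => by simp [hm.not_ge]⟩
  rcases lt_trichotomy i n with hi | rfl | hi
  · simp only [hi.le, Nat.succ_le_of_lt hi, if_true]
    exact hf i hi
  · simp only [le_refl, Nat.not_succ_le_self, if_true, if_false, hfn, he]
    exact x.2 i
  · simp only [hi.not_ge, (hi.trans (Nat.lt_succ_self i)).not_ge, if_false]
    exact x.2 i

theorem not_isMaxPath_iff {x : B.PathSpace} : ¬ B.IsMaxPath x ↔ ∃ z, B.pathLT x z := by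
  constructor
  · intro hx
    simp only [IsMaxPath, IsMaxEdge, not_forall, not_not] at hx
    obtain ⟨n, e, hlt⟩ := hx
    obtain ⟨z, hzn, hz⟩ := exists_path_eq_above x e (B.elt_tgt _ _ _ hlt).symm
    exact ⟨z, n, hzn ▸ hlt, fun m hm => (hz m hm).symm⟩
  · rintro ⟨z, N, hlt, -⟩ hx
    exact hx N _ hlt

theorem not_isMinPath_iff {x : B.PathSpace} : ¬ B.IsMinPath x ↔ ∃ z, B.pathLT z x := by
  constructor
  · intro hx
    simp only [IsMinPath, IsMinEdge, not_forall, not_not] at hx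
    obtain ⟨n, e, hlt⟩ := hx
    obtain ⟨z, hzn, hz⟩ := exists_path_eq_above x e (B.elt_tgt _ _ _ hlt)
    exact ⟨z, n, hzn ▸ hlt, hz⟩
  · rintro ⟨z, N, hlt, -⟩ hx
    exact hx N _ hlt

theorem pathLT_or_pathLT_of_eventuallyEq {x y : B.PathSpace} (hne : x ≠ y) {M : ℕ}
    (hM : ∀ n, M ≤ n → x.1 n = y.1 n) : B.pathLT x y ∨ B.pathLT y x := by
  classical
  have hex : ∃ n, x.1 n ≠ y.1 n := by
    by_contra h
    exact hne (Subtype.ext (funext (not_exists_not.mp h)))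
  obtain ⟨n₀, hn₀⟩ := hex
  have hn₀M : n₀ ≤ M := (lt_of_not_ge fun h => hn₀ (hM n₀ h)).le
  set N := Nat.findGreatest (fun n => x.1 n ≠ y.1 n) M
  have hN : x.1 N ≠ y.1 N := Nat.findGreatest_spec (P := fun n => x.1 n ≠ y.1 n) hn₀M hn₀
  have hafter : ∀ n, N < n → x.1 n = y.1 n := fun n hn => by
    by_contra h
    rcases lt_or_ge n M with h' | h'
    · exact Nat.findGreatest_is_greatest hn h'.le h
    · exact h (hM n h')
  have htgt : B.tgt (x.1 N) = B.tgt (y.1 N) := by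
    rw [x.2, y.2, hafter _ (Nat.lt_succ_self _)]
  rcases B.elt_total _ _ _ htgt hN with h | h
  · exact Or.inl ⟨N, h, hafter⟩
  · exact Or.inr ⟨N, h, fun n hn => (hafter n hn).symm⟩

theorem eq_of_pathLT_of_not_pathLT {T : B.PathSpace ≃ B.PathSpace} (hT : B.IsVershik T)
    {x z : B.PathSpace} (hx : ¬ B.IsMaxPath x) (hxz : B.pathLT x z)
    (hzT : ¬ B.pathLT (T x) z) : z = T x := by
  obtain ⟨hxT, hmin⟩ := hT.1 x hx
  by_contra hne
  refine hmin z hxz ?_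
  obtain ⟨N₁, -, h₁⟩ := hxz
  obtain ⟨N₂, -, h₂⟩ := hxT
  have hcofinal : ∀ n, max N₁ N₂ + 1 ≤ n → z.1 n = (T x).1 n :=
    fun n hn => (h₁ n (by omega)).symm.trans (h₂ n (by omega))
  rcases pathLT_or_pathLT_of_eventuallyEq hne hcofinal with h | h
  · exact h
  · exact absurd h hzT

section Telescope

variable (ns : ℕ → ℕ) (hmono : StrictMono ns) (h0 : ns 0 = 0)

local notation "𝕋" => BDiagram.Telescope B ns hmono h0
local notation "τ" => BDiagram.teleMap B ns hmono h0

theorem castE_telescope_apply (y : PathSpace 𝕋) {l l' i j : ℕ} (hl : l' = l) (hji : j = i)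
    (hj : j < ns (l' + 1) - ns l') (hi : i < ns (l + 1) - ns l) (he : ns l' + j = ns l + i) :
    B.castE he ((y.1 l').1 ⟨j, hj⟩) = (y.1 l).1 ⟨i, hi⟩ := by
  subst hl hji
  rfl

theorem castV_tgt_telE_congr {a b i j : ℕ} (f : B.TelE a b) (hij : i = j) (hi : i < b - a)
    (hj : j < b - a) {c : ℕ} (hi' : a + i + 1 = c) (hj' : a + j + 1 = c) :
    B.castV hi' (B.tgt (f.1 ⟨i, hi⟩)) = B.castV hj' (B.tgt (f.1 ⟨j, hj⟩)) := by
  subst hij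
  rfl

theorem tgt_eq_src_of_castV {f : ∀ n, B.E n} {n m : ℕ} (h : n + 1 = m)
    (hc : B.castV h (B.tgt (f n)) = B.src (f m)) : B.tgt (f n) = B.src (f (n + 1)) := by
  subst h
  exact hc

/-- The edge at level `n` of the path of `B` underlying a path `y` of the telescoping. -/
noncomputable def unteleEdge (y : PathSpace 𝕋) (n : ℕ) : B.E n :=
  B.castE (Nat.add_sub_cancel' (hmono.exists_le_and_lt_succ h0 n).choose_spec.1)
    ((y.1 (hmono.exists_le_and_lt_succ h0 n).choose).1
      ⟨n - ns (hmono.exists_le_and_lt_succ h0 n).choose,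
        by have := (hmono.exists_le_and_lt_succ h0 n).choose_spec; omega⟩)

theorem unteleEdge_add (y : PathSpace 𝕋) {l i : ℕ} (hi : i < ns (l + 1) - ns l) :
    unteleEdge ns hmono h0 y (ns l + i) = (y.1 l).1 ⟨i, hi⟩ := by
  have hc := (hmono.exists_le_and_lt_succ h0 (ns l + i)).choose_spec
  have hl := hmono.eq_of_le_of_lt_succ hc.1 hc.2 (l' := l) (by omega) (by omega)
  exact castE_telescope_apply ns hmono h0 y hl (by rw [hl]; omega) _ hi _

theorem unteleEdge_chain (y : PathSpace 𝕋) (n : ℕ) :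
    B.tgt (unteleEdge ns hmono h0 y n) = B.src (unteleEdge ns hmono h0 y (n + 1)) := by
  obtain ⟨l, h₁, h₂⟩ := hmono.exists_le_and_lt_succ h0 n
  obtain ⟨i, rfl⟩ := Nat.exists_eq_add_of_le h₁
  rcases Nat.lt_or_ge (i + 1) (ns (l + 1) - ns l) with hlt | hge
  · rw [unteleEdge_add ns hmono h0 y (by omega : i < _)]
    exact ((y.1 l).2 i hlt).trans (congrArg B.src (unteleEdge_add ns hmono h0 y hlt).symm)
  · refine tgt_eq_src_of_castV (m := ns (l + 1) + 0) (by omega) ?_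
    rw [unteleEdge_add ns hmono h0 y (by omega : i < _),
      unteleEdge_add ns hmono h0 y (by have := hmono (show l + 1 < l + 1 + 1 by omega); omega)]
    exact (castV_tgt_telE_congr (y.1 l) (by omega) _ (by omega) _ _).trans (y.2 l)

theorem teleMap_surjective : Function.Surjective τ := fun y =>
  ⟨⟨unteleEdge ns hmono h0 y, unteleEdge_chain ns hmono h0 y⟩,
    Subtype.ext (funext fun _ => Subtype.ext (funext fun i => unteleEdge_add ns hmono h0 y i.2))⟩

theorem teleMap_apply_eq_iff {x y : B.PathSpace} (l : ℕ) :
    (τ x).1 l = (τ y).1 l ↔ ∀ n, ns l ≤ n → n < ns (l + 1) → x.1 n = y.1 n := by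
  constructor
  · intro h n h₁ h₂
    obtain ⟨i, rfl⟩ := Nat.exists_eq_add_of_le h₁
    exact congrFun (congrArg Subtype.val h) ⟨i, by omega⟩
  · intro h
    exact Subtype.ext (funext fun i => h _ (Nat.le_add_right _ _) (by omega))

theorem teleMap_eqOn_lt_iff {x y : B.PathSpace} (k : ℕ) :
    (∀ l < k, (τ x).1 l = (τ y).1 l) ↔ ∀ n < ns k, x.1 n = y.1 n := by
  simp only [teleMap_apply_eq_iff]
  constructor
  · intro h n hn
    obtain ⟨l, h₁, h₂⟩ := hmono.exists_le_and_lt_succ h0 n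
    exact h l (hmono.lt_iff_lt.mp (h₁.trans_lt hn)) n h₁ h₂
  · intro h l hl n _ h₂
    exact h n (h₂.trans_le (hmono.monotone hl))

theorem teleMap_eqOn_gt_iff {x y : B.PathSpace} (L : ℕ) :
    (∀ l, L < l → (τ x).1 l = (τ y).1 l) ↔ ∀ n, ns (L + 1) ≤ n → x.1 n = y.1 n := by
  simp only [teleMap_apply_eq_iff]
  constructor
  · intro h n hn
    obtain ⟨l, h₁, h₂⟩ := hmono.exists_le_and_lt_succ h0 n
    exact h l (by have := hmono.lt_iff_lt.mp (hn.trans_lt h₂); omega) n h₁ h₂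
  · intro h l hl n h₁ _
    exact h n ((hmono.monotone hl).trans h₁)

theorem pathLT_teleMap_iff {x y : B.PathSpace} : pathLT 𝕋 (τ x) (τ y) ↔ B.pathLT x y := by
  constructor
  · rintro ⟨L, ⟨j, hj, hlt, hblock⟩, habove⟩
    refine ⟨ns L + j, hlt, fun n hn => ?_⟩
    rcases Nat.lt_or_ge n (ns (L + 1)) with h | h
    · obtain ⟨i, rfl⟩ := Nat.exists_eq_add_of_le (show ns L ≤ n by omega)
      exact hblock i (by omega) (by omega)
    · exact (teleMap_eqOn_gt_iff ns hmono h0 L).mp habove n h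
  · rintro ⟨N, hlt, habove⟩
    obtain ⟨L, h₁, h₂⟩ := hmono.exists_le_and_lt_succ h0 N
    obtain ⟨j, rfl⟩ := Nat.exists_eq_add_of_le h₁
    refine ⟨L, ⟨j, by omega, hlt, fun i _ hi => habove (ns L + i) (by omega)⟩, ?_⟩
    exact (teleMap_eqOn_gt_iff ns hmono h0 L).mpr fun n hn => habove n (by omega)

theorem isMaxPath_teleMap_iff {x : B.PathSpace} : IsMaxPath 𝕋 (τ x) ↔ B.IsMaxPath x := by
  rw [← not_iff_not, not_isMaxPath_iff, not_isMaxPath_iff,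
    (teleMap_surjective ns hmono h0).exists]
  simp only [pathLT_teleMap_iff]

theorem isMinPath_teleMap_iff {x : B.PathSpace} : IsMinPath 𝕋 (τ x) ↔ B.IsMinPath x := by
  rw [← not_iff_not, not_isMinPath_iff, not_isMinPath_iff,
    (teleMap_surjective ns hmono h0).exists]
  simp only [pathLT_teleMap_iff]

theorem semiconj_teleMap {T : B.PathSpace ≃ B.PathSpace} {T' : PathSpace 𝕋 ≃ PathSpace 𝕋}
    (hproper : B.ProperlyOrdered) (hT : B.IsVershik T) (hT' : IsVershik 𝕋 T') :
    Function.Semiconj τ T T' := by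
  intro x
  obtain ⟨z, hz⟩ := teleMap_surjective ns hmono h0 (T' (τ x))
  rw [← hz]
  congr 1
  by_cases hx : B.IsMaxPath x
  · have hx' := (isMaxPath_teleMap_iff ns hmono h0).mpr hx
    have hz : B.IsMinPath z := (isMinPath_teleMap_iff ns hmono h0).mp (hz ▸ hT'.2 _ hx')
    exact hproper.1.unique (hT.2 x hx) hz
  · have hx' := mt (isMaxPath_teleMap_iff ns hmono h0).mp hx
    obtain ⟨hxT', hminT'⟩ := hT'.1 _ hx'
    refine (eq_of_pathLT_of_not_pathLT hT hx ?_ fun hTz => ?_).symm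
    · rwa [← pathLT_teleMap_iff ns hmono h0, hz]
    · refine hminT' _ ((pathLT_teleMap_iff ns hmono h0).mpr (hT.1 x hx).1) ?_
      rwa [← hz, pathLT_teleMap_iff ns hmono h0]

theorem sameCoding_teleMap_iff {T : B.PathSpace ≃ B.PathSpace}
    {T' : PathSpace 𝕋 ≃ PathSpace 𝕋} (hTT' : Function.Semiconj τ T T') (k : ℕ)
    {x y : B.PathSpace} : SameCoding 𝕋 T' k (τ x) (τ y) ↔ B.SameCoding T (ns k) x y := by
  refine forall_congr' fun m => ?_
  rw [iterZ, iterZ, ← hTT'.perm_zpow m x, ← hTT'.perm_zpow m y]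
  exact teleMap_eqOn_lt_iff ns hmono h0 k

end Telescope

end BDiagram

theorem depth_pair_lifts_general
    (B : BDiagram) (T : B.PathSpace ≃ B.PathSpace)
    (hproper : B.ProperlyOrdered) (hT : B.IsVershik T)
    (ns : ℕ → ℕ) (hmono : StrictMono ns) (h0 : ns 0 = 0)
    (T' : (B.Telescope ns hmono h0).PathSpace ≃ (B.Telescope ns hmono h0).PathSpace)
    (hT' : (B.Telescope ns hmono h0).IsVershik T')
    (k : ℕ) (x' y' : (B.Telescope ns hmono h0).PathSpace)
    (hxy' : (B.Telescope ns hmono h0).DepthPair T' k x' y') :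
    ∃ (x y : B.PathSpace) (i : ℕ), ns k ≤ i ∧ i < ns (k + 1) ∧
      B.DepthPair T i x y ∧
      B.teleMap ns hmono h0 x = x' ∧ B.teleMap ns hmono h0 y = y' := by
  obtain ⟨x, rfl⟩ := B.teleMap_surjective ns hmono h0 x'
  obtain ⟨y, rfl⟩ := B.teleMap_surjective ns hmono h0 y'
  obtain ⟨hne, hsame, hdiff⟩ := hxy'
  have hTT' := B.semiconj_teleMap ns hmono h0 hproper hT hT'
  rw [B.sameCoding_teleMap_iff ns hmono h0 hTT'] at hsame hdiff
  obtain ⟨i, hki, hik, hsame_i, hdiff_i⟩ :=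
    Nat.exists_le_lt_and_not_succ (P := fun j => B.SameCoding T j x y)
      (hmono.monotone (Nat.le_add_right k 1)) hsame hdiff
  exact ⟨x, y, i, hki, hik, ⟨fun h => hne (congrArg _ h), hsame_i, hdiff_i⟩, rfl, rfl⟩

/-- Every depth `k` pair (`k ≥ 1`) in the telescoping of a
simple, properly ordered Bratteli–Vershik system to levels `ns` is the image of a
pair in the original system that is depth `i` for some `ns k ≤ i < ns (k+1)`. -/
theorem depth_pair_lifts
    (B : BDiagram) (T : B.PathSpace ≃ B.PathSpace)
    (hproper : B.ProperlyOrdered) (hsimple : B.Simple) (hT : B.IsVershik T)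
    (ns : ℕ → ℕ) (hmono : StrictMono ns) (h0 : ns 0 = 0)
    (T' : (B.Telescope ns hmono h0).PathSpace ≃ (B.Telescope ns hmono h0).PathSpace)
    (hT' : (B.Telescope ns hmono h0).IsVershik T')
    (k : ℕ) (hk : 1 ≤ k) (x' y' : (B.Telescope ns hmono h0).PathSpace)
    (hxy' : (B.Telescope ns hmono h0).DepthPair T' k x' y') :
    ∃ (x y : B.PathSpace) (i : ℕ), ns k ≤ i ∧ i < ns (k + 1) ∧
      B.DepthPair T i x y ∧
      B.teleMap ns hmono h0 x = x' ∧ B.teleMap ns hmono h0 y = y' :=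
  depth_pair_lifts_general B T hproper hT ns hmono h0 T' hT' k x' y' hxy'
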